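/- Let 3 ≤ k < n ≤ q, let α_1,…,α_n be distinct elements of F_q, let η ∈ F_q^*, and fix 0 ≤ h ≤ k−1 and 0 ≤ t ≤ n−k−1. Let G be the k×n matrix whose m-th row has entries α_j^m for m≠h, and whose h-th row has entries α_j^h + η·α_j^{k+t} (1≤j≤n). Then the following are equivalent: (a) for every nonzero f∈F_q^k, the codeword f·G has Hamming weight at least n−k+1; (b) for every k-subset I of {1,…,n}, η·∑_{i=0}^{t} c_{k−h+t−i}(I)·w_{k−1+i}(I) ≠ 1, where G_I(x)=∏_{i∈I}(x−α_i)=∑_{j=0}^k c_j(I) x^{k−j} (with c_0(I)=1 and c_j(I)=0 for j<0 or j>k), u_i=1/G_I'(α_i), and w_s(I)=∑_{i∈I} u_i α_i^s. -/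
import Mathlib

open Polynomial Finset Matrix

set_option linter.unusedSectionVars false
set_option linter.unusedVariables false

namespace Stmt18Aux

variable {F : Type*} [Field F] [DecidableEq F] {n : ℕ}

noncomputable def Wfun (α : Fin n → F) (I : Finset (Fin n)) (s : ℕ) : F :=
  ∑ i ∈ I, ((Polynomial.derivative (∏ j ∈ I, (X - C (α j)))).eval (α i))⁻¹ * α i ^ s

noncomputable def GIp (α : Fin n → F) (I : Finset (Fin n)) : F[X] :=
  ∏ i ∈ I, (X - C (α i))

noncomputable def rstar (α : Fin n → F) (I : Finset (Fin n)) (k t : ℕ) : F[X] :=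
  ∑ i ∈ Finset.range (t + 1), C (Wfun α I (k - 1 + i)) * X ^ (t - i)

variable {α : Fin n → F}

lemma GIp_monic (I : Finset (Fin n)) : (GIp α I).Monic :=
  monic_prod_of_monic _ _ fun i _ => monic_X_sub_C (α i)

lemma GIp_ne_zero (I : Finset (Fin n)) : (GIp α I) ≠ (0 : F[X]) := (GIp_monic I).ne_zero

lemma GIp_natDegree (I : Finset (Fin n)) : (GIp α I).natDegree = I.card := by
  unfold GIp
  rw [natDegree_prod _ _ (fun i _ => X_sub_C_ne_zero (α i))]
  simp

lemma GIp_coeff_eq_zero {I : Finset (Fin n)} {N : ℕ} (hN : I.card < N) :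
    (GIp α I).coeff N = 0 :=
  coeff_eq_zero_of_natDegree_lt (by rw [GIp_natDegree]; exact hN)

lemma GIp_eval_root {I : Finset (Fin n)} {i : Fin n} (hi : i ∈ I) :
    (GIp α I).eval (α i) = 0 := by
  unfold GIp
  rw [eval_prod]
  exact Finset.prod_eq_zero hi (by simp)

lemma deriv_eval (hα : Function.Injective α) {I : Finset (Fin n)} {i : Fin n} (hi : i ∈ I) :
    (Polynomial.derivative (∏ j ∈ I, (X - C (α j)) : F[X])).eval (α i)
      = ∏ j ∈ I.erase i, (α i - α j) := by
  rw [← Finset.mul_prod_erase I _ hi]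
  simp [derivative_mul, eval_prod]

lemma prod_erase_ne_zero (hα : Function.Injective α) {I : Finset (Fin n)} {i : Fin n}
    (hi : i ∈ I) : (∏ j ∈ I.erase i, (α i - α j)) ≠ 0 := by
  rw [Finset.prod_ne_zero_iff]
  intro j hj
  exact sub_ne_zero.mpr fun e => (Finset.mem_erase.mp hj).1 ((hα e).symm)

lemma prod_erase_monic (I : Finset (Fin n)) (i : Fin n) :
    (∏ j ∈ I.erase i, (X - C (α j)) : F[X]).Monic :=
  monic_prod_of_monic _ _ fun j _ => monic_X_sub_C (α j)

lemma prod_erase_natDegree {I : Finset (Fin n)} {i : Fin n} (hi : i ∈ I) :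
    (∏ j ∈ I.erase i, (X - C (α j)) : F[X]).natDegree = I.card - 1 := by
  rw [natDegree_prod _ _ (fun j _ => X_sub_C_ne_zero (α j))]
  simp [Finset.card_erase_of_mem hi]

lemma W_low (hα : Function.Injective α) {I : Finset (Fin n)} {k : ℕ} (hI : I.card = k)
    {s : ℕ} (hs : s < k) : Wfun α I s = if s = k - 1 then 1 else 0 := by
  classical
  set P : F[X] := ∑ i ∈ I, C ((∏ j ∈ I.erase i, (α i - α j))⁻¹ * α i ^ s)
      * ∏ j ∈ I.erase i, (X - C (α j)) with hP
  have hPdeg : P.natDegree ≤ k - 1 := by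
    apply natDegree_sum_le_of_forall_le
    intro i hi
    refine natDegree_mul_le.trans ?_
    rw [natDegree_C, prod_erase_natDegree hi, hI]
    omega
  have hPeval : ∀ m ∈ I, P.eval (α m) = α m ^ s := by
    intro m hm
    rw [hP, eval_finset_sum]
    rw [Finset.sum_eq_single m]
    · simp only [eval_mul, eval_C, eval_prod, eval_sub, eval_X]
      rw [mul_comm ((∏ j ∈ I.erase m, (α m - α j))⁻¹) (α m ^ s), mul_assoc,
        inv_mul_cancel₀ (prod_erase_ne_zero hα hm), mul_one]
    · intro i hiI hne
      simp only [eval_mul, eval_C, eval_prod, eval_sub, eval_X]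
      have hz : (∏ j ∈ I.erase i, (α m - α j)) = 0 :=
        Finset.prod_eq_zero (Finset.mem_erase.mpr ⟨hne.symm, hm⟩) (sub_self (α m))
      rw [hz, mul_zero]
    · intro habs; exact absurd hm habs
  have hPX : P = X ^ s := by
    have h0 : P - X ^ s = 0 := by
      apply eq_zero_of_natDegree_lt_card_of_eval_eq_zero (P - X ^ s)
        (f := fun i : {x // x ∈ I} => α i.1) (fun i j hij => Subtype.ext (hα hij))
      · intro i
        rw [eval_sub, hPeval i.1 i.2, eval_pow, eval_X, sub_self]
      · have h1 := natDegree_sub_le P (X ^ s : F[X])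
        rw [natDegree_X_pow] at h1
        have h2 : Fintype.card {x // x ∈ I} = k := by rw [Fintype.card_coe, hI]
        rw [h2]
        omega
    have := sub_eq_zero.mp h0
    exact this
  have hco : P.coeff (k - 1) = ∑ i ∈ I, (∏ j ∈ I.erase i, (α i - α j))⁻¹ * α i ^ s := by
    rw [hP, finset_sum_coeff]
    apply Finset.sum_congr rfl
    intro i hi
    rw [coeff_C_mul]
    have hdeg : (∏ j ∈ I.erase i, (X - C (α j)) : F[X]).natDegree = k - 1 := by
      rw [prod_erase_natDegree hi, hI]
    rw [show (k - 1) = (∏ j ∈ I.erase i, (X - C (α j)) : F[X]).natDegree from hdeg.symm,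
      (prod_erase_monic I i).coeff_natDegree, mul_one]
  have hW : Wfun α I s = P.coeff (k - 1) := by
    rw [hco]
    unfold Wfun
    exact Finset.sum_congr rfl fun i hi => by rw [deriv_eval hα hi]
  rw [hW, hPX, coeff_X_pow]
  simp [eq_comm]

lemma W_rec {I : Finset (Fin n)} {k : ℕ} (hI : I.card = k) {s : ℕ} (hs : k ≤ s) :
    ∑ a ∈ Finset.range (k + 1), (GIp α I).coeff (k - a) * Wfun α I (s - a) = 0 := by
  have key : ∀ x : F, (GIp α I).eval x = 0 →
      ∑ a ∈ Finset.range (k + 1), (GIp α I).coeff (k - a) * x ^ (s - a) = 0 := by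
    intro x hx
    have h1 : ∀ a ∈ Finset.range (k + 1), (GIp α I).coeff (k - a) * x ^ (s - a)
        = x ^ (s - k) * ((GIp α I).coeff (k - a) * x ^ (k - a)) := by
      intro a ha
      rw [Finset.mem_range] at ha
      rw [show s - a = (s - k) + (k - a) by omega, pow_add]
      ring
    rw [Finset.sum_congr rfl h1, ← Finset.mul_sum]
    have h2 : ∑ a ∈ Finset.range (k + 1), (GIp α I).coeff (k - a) * x ^ (k - a)
        = ∑ a ∈ Finset.range (k + 1), (GIp α I).coeff a * x ^ a := by
      have h3 := Finset.sum_range_reflect (fun a => (GIp α I).coeff a * x ^ a) (k + 1)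
      simpa using h3
    rw [h2, ← eval_eq_sum_range' (by rw [GIp_natDegree, hI]; omega) x, hx, mul_zero]
  unfold Wfun
  calc ∑ a ∈ Finset.range (k + 1), (GIp α I).coeff (k - a) *
        ∑ i ∈ I, ((Polynomial.derivative (∏ j ∈ I, (X - C (α j)))).eval (α i))⁻¹ * α i ^ (s - a)
      = ∑ a ∈ Finset.range (k + 1), ∑ i ∈ I,
          ((Polynomial.derivative (∏ j ∈ I, (X - C (α j)))).eval (α i))⁻¹ *
            ((GIp α I).coeff (k - a) * α i ^ (s - a)) := by
        apply Finset.sum_congr rfl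
        intro a _
        rw [Finset.mul_sum]
        exact Finset.sum_congr rfl fun i _ => by ring
    _ = ∑ i ∈ I, ((Polynomial.derivative (∏ j ∈ I, (X - C (α j)))).eval (α i))⁻¹ *
          ∑ a ∈ Finset.range (k + 1), (GIp α I).coeff (k - a) * α i ^ (s - a) := by
        rw [Finset.sum_comm]
        exact Finset.sum_congr rfl fun i _ => by rw [Finset.mul_sum]
    _ = 0 := Finset.sum_eq_zero fun i hi => by rw [key (α i) (GIp_eval_root hi), mul_zero]

lemma rstar_coeff (I : Finset (Fin n)) (k t y : ℕ) :
    (rstar α I k t).coeff y = if y ≤ t then Wfun α I (k - 1 + (t - y)) else 0 := by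
  unfold rstar
  rw [finset_sum_coeff]
  by_cases hy : y ≤ t
  · rw [if_pos hy, Finset.sum_eq_single (t - y)]
    · rw [coeff_C_mul, coeff_X_pow, if_pos (by omega), mul_one]
    · intro i hi hne
      rw [Finset.mem_range] at hi
      rw [coeff_C_mul, coeff_X_pow, if_neg (by omega), mul_zero]
    · intro habs
      exact absurd (Finset.mem_range.mpr (by omega)) habs
  · rw [if_neg hy]
    apply Finset.sum_eq_zero
    intro i hi
    rw [Finset.mem_range] at hi
    rw [coeff_C_mul, coeff_X_pow, if_neg (by omega), mul_zero]

lemma rstar_natDegree_le (I : Finset (Fin n)) (k t : ℕ) : (rstar α I k t).natDegree ≤ t := by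
  apply natDegree_sum_le_of_forall_le
  intro i _
  exact (natDegree_C_mul_le _ _).trans (by rw [natDegree_X_pow]; omega)

lemma rstar_coeff_t (hα : Function.Injective α) {I : Finset (Fin n)} {k : ℕ} (hI : I.card = k)
    (hk : 1 ≤ k) (t : ℕ) : (rstar α I k t).coeff t = 1 := by
  rw [rstar_coeff, if_pos le_rfl, Nat.sub_self, Nat.add_zero,
    W_low hα hI (by omega), if_pos rfl]

lemma GI_mul_rstar_coeff (I : Finset (Fin n)) (k t N : ℕ) :
    (GIp α I * rstar α I k t).coeff N
      = ∑ i ∈ Finset.range (t + 1), Wfun α I (k - 1 + i) *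
          (if t - i ≤ N then (GIp α I).coeff (N - (t - i)) else 0) := by
  unfold rstar
  rw [Finset.mul_sum, finset_sum_coeff]
  apply Finset.sum_congr rfl
  intro i _
  rw [show GIp α I * (C (Wfun α I (k - 1 + i)) * X ^ (t - i))
      = (C (Wfun α I (k - 1 + i)) * GIp α I) * X ^ (t - i) by ring, coeff_mul_X_pow']
  split_ifs with hcond
  · rw [coeff_C_mul]
  · rw [mul_zero]

lemma GI_mul_rstar_coeff_high (hα : Function.Injective α) {I : Finset (Fin n)} {k : ℕ}
    (hI : I.card = k) (hk : 1 ≤ k) (t : ℕ) {j : ℕ} (hj : j ≤ t) :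
    (GIp α I * rstar α I k t).coeff (k + j) = if j = t then 1 else 0 := by
  rw [GI_mul_rstar_coeff]
  by_cases hjt : j = t
  · subst hjt
    rw [if_pos rfl, Finset.sum_eq_single 0]
    · rw [if_pos (by omega), show k + j - (j - 0) = k by omega]
      have hc1 : (GIp α I).coeff k = 1 := by
        have h1 := (GIp_monic (α := α) I).coeff_natDegree
        rwa [GIp_natDegree, hI] at h1
      rw [hc1, mul_one, Nat.add_zero, W_low hα hI (by omega), if_pos rfl]
    · intro i hi hne
      rw [Finset.mem_range] at hi
      rw [if_pos (by omega), GIp_coeff_eq_zero (by omega), mul_zero]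
    · intro habs
      exact absurd (Finset.mem_range.mpr (by omega)) habs
  · rw [if_neg hjt]
    have hjlt : j < t := lt_of_le_of_ne hj hjt
    set m := t - j with hm
    have hm1 : 1 ≤ m := by omega
    -- step A : termwise rewrite
    have stepA : ∑ i ∈ Finset.range (t + 1), Wfun α I (k - 1 + i) *
          (if t - i ≤ k + j then (GIp α I).coeff (k + j - (t - i)) else 0)
        = ∑ i ∈ Finset.range (t + 1),
            (if i ≤ m ∧ m - i ≤ k then (GIp α I).coeff (k - (m - i)) * Wfun α I (k - 1 + i)
             else 0) := by
      apply Finset.sum_congr rfl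
      intro i hi
      rw [Finset.mem_range] at hi
      by_cases h1 : t - i ≤ k + j
      · rw [if_pos h1]
        by_cases h2 : i ≤ m ∧ m - i ≤ k
        · rw [if_pos h2, show k + j - (t - i) = k - (m - i) by omega, mul_comm]
        · rw [if_neg h2]
          have h3 : k < k + j - (t - i) := by omega
          rw [GIp_coeff_eq_zero (by omega), mul_zero]
      · rw [if_neg h1, mul_zero, if_neg (by omega)]
    rw [stepA, Finset.sum_ite, Finset.sum_const_zero, add_zero]
    -- step C : transform W_rec
    have hrec := W_rec (α := α) hI (s := k - 1 + m) (by omega)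
    have stepC : ∑ a ∈ (Finset.range (k + 1)).filter (fun a => a ≤ m),
        (GIp α I).coeff (k - a) * Wfun α I (k - 1 + (m - a)) = 0 := by
      rw [Finset.sum_filter]
      have e : ∀ a ∈ Finset.range (k + 1),
          (if a ≤ m then (GIp α I).coeff (k - a) * Wfun α I (k - 1 + (m - a)) else 0)
            = (GIp α I).coeff (k - a) * Wfun α I (k - 1 + m - a) := by
        intro a ha
        rw [Finset.mem_range] at ha
        by_cases h1 : a ≤ m
        · rw [if_pos h1, show k - 1 + m - a = k - 1 + (m - a) by omega]
        · rw [if_neg h1, W_low hα hI (show k - 1 + m - a < k by omega), if_neg (by omega),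
            mul_zero]
      rw [Finset.sum_congr rfl e]
      exact hrec
    refine Eq.trans ?_ stepC
    refine Finset.sum_nbij' (fun i => m - i) (fun a => m - a) ?_ ?_ ?_ ?_ ?_
    · intro a ha
      simp only [Finset.mem_filter, Finset.mem_range] at ha ⊢
      omega
    · intro a ha
      simp only [Finset.mem_filter, Finset.mem_range] at ha ⊢
      omega
    · intro a ha
      simp only [Finset.mem_filter, Finset.mem_range] at ha
      show m - (m - a) = a
      omega
    · intro a ha
      simp only [Finset.mem_filter, Finset.mem_range] at ha
      show m - (m - a) = a
      omega
    · intro a ha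
      simp only [Finset.mem_filter, Finset.mem_range] at ha
      show _ = (GIp α I).coeff (k - (m - a)) * Wfun α I (k - 1 + (m - (m - a)))
      rw [show m - (m - a) = a by omega]

lemma GI_mul_rstar_coeff_h {I : Finset (Fin n)} {k h : ℕ} (hh : h < k) (t : ℕ) :
    (GIp α I * rstar α I k t).coeff h
      = ∑ i ∈ Finset.range (t + 1),
          (if k - h + t - i ≤ k then (GIp α I).coeff (k - (k - h + t - i)) else 0) *
            Wfun α I (k - 1 + i) := by
  rw [GI_mul_rstar_coeff]
  apply Finset.sum_congr rfl
  intro i hi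
  rw [Finset.mem_range] at hi
  by_cases hcase : t - i ≤ h
  · rw [if_pos hcase, if_pos (by omega), show k - (k - h + t - i) = h - (t - i) by omega,
      mul_comm]
  · rw [if_neg hcase, if_neg (by omega), mul_zero, zero_mul]

lemma GI_mul_rstar_natDegree_le {I : Finset (Fin n)} {k : ℕ} (hI : I.card = k) (t : ℕ) :
    (GIp α I * rstar α I k t).natDegree ≤ k + t := by
  refine natDegree_mul_le.trans ?_
  rw [GIp_natDegree, hI]
  exact Nat.add_le_add le_rfl (rstar_natDegree_le I k t)

lemma coeff_mul_top {p r : F[X]} {k t : ℕ} (hp : p.Monic) (hpd : p.natDegree = k)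
    (hr : r.natDegree ≤ t) : (p * r).coeff (k + t) = r.coeff t := by
  by_cases h0 : r = 0
  · simp [h0]
  by_cases hrd : r.natDegree = t
  · have h1 := coeff_mul_degree_add_degree p r
    rw [hpd, hrd] at h1
    rw [h1, hp.leadingCoeff, one_mul, leadingCoeff, hrd]
  · have h1 : r.natDegree < t := lt_of_le_of_ne hr hrd
    rw [coeff_eq_zero_of_natDegree_lt (lt_of_le_of_lt natDegree_mul_le (by omega)),
      coeff_eq_zero_of_natDegree_lt h1]

lemma r_eq (hα : Function.Injective α) {I : Finset (Fin n)} {k t : ℕ} (hI : I.card = k)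
    (hk : 1 ≤ k) {r : F[X]} (hr : r.natDegree ≤ t)
    (hmid : ∀ j, j < t → (GIp α I * r).coeff (k + j) = 0) :
    r = C (r.coeff t) * rstar α I k t := by
  by_contra hne
  set d := r - C (r.coeff t) * rstar α I k t with hd
  have hd0 : d ≠ 0 := sub_ne_zero.mpr hne
  have hdd : d.natDegree ≤ t := by
    refine (natDegree_sub_le _ _).trans ?_
    simp only [max_le_iff]
    exact ⟨hr, (natDegree_C_mul_le _ _).trans (rstar_natDegree_le I k t)⟩
  have hGd : GIp α I * d ≠ 0 := mul_ne_zero (GIp_ne_zero I) hd0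
  have hdeg : (GIp α I * d).natDegree = k + d.natDegree := by
    rw [natDegree_mul (GIp_ne_zero I) hd0, GIp_natDegree, hI]
  have hGIdeg : (GIp α I).natDegree = k := by rw [GIp_natDegree, hI]
  have hco : (GIp α I * d).coeff (k + d.natDegree) = 0 := by
    have hexp : GIp α I * d = GIp α I * r - C (r.coeff t) * (GIp α I * rstar α I k t) := by
      rw [hd]; ring
    rw [hexp, coeff_sub, coeff_C_mul]
    by_cases hj : d.natDegree = t
    · rw [hj, coeff_mul_top (GIp_monic I) hGIdeg hr,
        coeff_mul_top (GIp_monic I) hGIdeg (rstar_natDegree_le I k t),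
        rstar_coeff_t hα hI hk, mul_one, sub_self]
    · have hjt : d.natDegree < t := lt_of_le_of_ne hdd hj
      rw [hmid _ hjt, GI_mul_rstar_coeff_high hα hI hk t (le_of_lt hjt), if_neg hj, mul_zero,
        sub_zero]
  exact hGd (leadingCoeff_eq_zero.mp (by rw [leadingCoeff, hdeg]; exact hco))

noncomputable def Pf (η : F) (k t h : ℕ) (hhk : h < k) (f : Fin k → F) : F[X] :=
  (∑ m : Fin k, C (f m) * X ^ (m : ℕ)) + C (η * f ⟨h, hhk⟩) * X ^ (k + t)

lemma fsum_coeff_lt {k : ℕ} (f : Fin k → F) (m : Fin k) :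
    (∑ b : Fin k, C (f b) * X ^ (b : ℕ) : F[X]).coeff (m : ℕ) = f m := by
  rw [finset_sum_coeff, Finset.sum_eq_single m]
  · rw [coeff_C_mul, coeff_X_pow, if_pos rfl, mul_one]
  · intro b _ hb
    rw [coeff_C_mul, coeff_X_pow, if_neg (fun e => hb (Fin.ext e.symm)), mul_zero]
  · intro habs
    exact absurd (Finset.mem_univ m) habs

lemma fsum_coeff_ge {k : ℕ} (f : Fin k → F) {N : ℕ} (hN : k ≤ N) :
    (∑ b : Fin k, C (f b) * X ^ (b : ℕ) : F[X]).coeff N = 0 := by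
  rw [finset_sum_coeff]
  apply Finset.sum_eq_zero
  intro b _
  rw [coeff_C_mul, coeff_X_pow, if_neg (by have := b.2; omega), mul_zero]

lemma Pf_coeff_lt {η : F} {k t h : ℕ} (hhk : h < k) (f : Fin k → F) (m : Fin k) :
    (Pf η k t h hhk f).coeff (m : ℕ) = f m := by
  unfold Pf
  rw [coeff_add, fsum_coeff_lt, coeff_C_mul, coeff_X_pow,
    if_neg (by have := m.2; omega), mul_zero, add_zero]

lemma Pf_coeff_mid {η : F} {k t h : ℕ} (hhk : h < k) (f : Fin k → F) {N : ℕ} (hN : k ≤ N)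
    (hN2 : N ≠ k + t) : (Pf η k t h hhk f).coeff N = 0 := by
  unfold Pf
  rw [coeff_add, fsum_coeff_ge f hN, coeff_C_mul, coeff_X_pow, if_neg hN2, mul_zero, add_zero]

lemma Pf_coeff_top {η : F} {k t h : ℕ} (hhk : h < k) (f : Fin k → F) :
    (Pf η k t h hhk f).coeff (k + t) = η * f ⟨h, hhk⟩ := by
  unfold Pf
  rw [coeff_add, fsum_coeff_ge f (by omega), coeff_C_mul, coeff_X_pow, if_pos rfl, mul_one,
    zero_add]

lemma Pf_natDegree_le {η : F} {k t h : ℕ} (hhk : h < k) (f : Fin k → F) :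
    (Pf η k t h hhk f).natDegree ≤ k + t := by
  rw [natDegree_le_iff_coeff_eq_zero]
  intro N hN
  exact Pf_coeff_mid hhk f (by omega) (by omega)

lemma Pf_ne_zero {η : F} {k t h : ℕ} (hhk : h < k) {f : Fin k → F} (hf : f ≠ 0) :
    Pf η k t h hhk f ≠ 0 := by
  obtain ⟨m, hm⟩ := Function.ne_iff.mp hf
  intro h0
  apply hm
  have := Pf_coeff_lt (η := η) (t := t) hhk f m
  rw [h0, coeff_zero] at this
  exact this.symm

lemma Pf_eval {η : F} {k t h : ℕ} (hhk : h < k) (f : Fin k → F) (x : F) :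
    (Pf η k t h hhk f).eval x
      = (∑ m : Fin k, f m * x ^ (m : ℕ)) + η * f ⟨h, hhk⟩ * x ^ (k + t) := by
  unfold Pf
  rw [eval_add, eval_finset_sum, eval_mul, eval_C, eval_pow, eval_X]
  congr 1
  exact Finset.sum_congr rfl fun m _ => by rw [eval_mul, eval_C, eval_pow, eval_X]

end Stmt18Aux

open Stmt18Aux

/-- MDS criterion for the single-twist TGRS code with twist `η x^{k+t}` at hook `h`: the
code generated by the matrix with rows `α_j^m` for `m ≠ h` and `h`-th row
`α_j^h + η α_j^{k+t}` is MDS if and only if for every `k`-subset `I`,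
`η · ∑_{i=0}^{t} c_{k-h+t-i}(I) · w_{k-1+i}(I) ≠ 1`. -/
theorem stmt_18 {F : Type*} [Field F] [Fintype F] [DecidableEq F] {q k n : ℕ}
    (hq : Fintype.card F = q) (hk : 3 ≤ k) (hkn : k < n) (hnq : n ≤ q)
    (α : Fin n → F) (hα : Function.Injective α)
    (η : F) (hη : η ≠ 0)
    (h t : ℕ) (hh : h ≤ k - 1) (ht : t ≤ n - k - 1)
    (Gmat : Matrix (Fin k) (Fin n) F)
    (hGmat : ∀ (m : Fin k) (j : Fin n), Gmat m j =
      if (m : ℕ) = h then α j ^ h + η * α j ^ (k + t) else α j ^ (m : ℕ))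
    (c : Finset (Fin n) → ℕ → F)
    (hc : ∀ I j, c I j =
      if j ≤ k then (∏ i ∈ I, (X - C (α i)) : F[X]).coeff (k - j) else 0)
    (w : Finset (Fin n) → ℕ → F)
    (hw : ∀ I s, w I s = ∑ i ∈ I,
      ((Polynomial.derivative (∏ j ∈ I, (X - C (α j)))).eval (α i))⁻¹ * α i ^ s) :
    (∀ f : Fin k → F, f ≠ 0 → n - k + 1 ≤ hammingNorm (Matrix.vecMul f Gmat)) ↔
      (∀ I : Finset (Fin n), I.card = k →
        η * ∑ i ∈ Finset.range (t + 1), c I (k - h + t - i) * w I (k - 1 + i) ≠ 1) := by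
  classical
  have hhk : h < k := by omega
  have hk1 : 1 ≤ k := by omega
  have hrow : ∀ (f : Fin k → F) (j : Fin n), Matrix.vecMul f Gmat j
      = (Pf η k t h hhk f).eval (α j) := by
    intro f j
    rw [Pf_eval]
    simp only [Matrix.vecMul, dotProduct]
    have e : ∀ m : Fin k, f m * Gmat m j = f m * α j ^ (m : ℕ)
        + (if m = (⟨h, hhk⟩ : Fin k) then η * f m * α j ^ (k + t) else 0) := by
      intro m
      rw [hGmat]
      by_cases hm : (m : ℕ) = h
      · rw [if_pos hm, if_pos (Fin.ext hm), ← hm]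
        ring
      · rw [if_neg hm, if_neg (fun e => hm (by rw [e])), add_zero]
    rw [Finset.sum_congr rfl fun m _ => e m, Finset.sum_add_distrib,
      Finset.sum_ite_eq' Finset.univ, if_pos (Finset.mem_univ _)]
  have hSsum : ∀ I : Finset (Fin n),
      (∑ i ∈ Finset.range (t + 1), c I (k - h + t - i) * w I (k - 1 + i))
        = (GIp α I * rstar α I k t).coeff h := by
    intro I
    rw [GI_mul_rstar_coeff_h hhk t]
    apply Finset.sum_congr rfl
    intro i _
    rw [hc, hw]
    rfl
  constructor
  · intro ha I hI hone
    rw [hSsum I] at hone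
    set Q := GIp α I * rstar α I k t with hQdef
    have hQh : Q.coeff h = η⁻¹ := by
      have h2 : η⁻¹ * (η * Q.coeff h) = η⁻¹ * 1 := by rw [hone]
      rwa [← mul_assoc, inv_mul_cancel₀ hη, one_mul, mul_one] at h2
    set f : Fin k → F := fun m => Q.coeff (m : ℕ) with hfdef
    have hQtop : Q.coeff (k + t) = 1 := by
      have h2 := GI_mul_rstar_coeff_high hα hI hk1 t (le_refl t)
      rw [if_pos rfl] at h2
      exact h2
    have hfh : f ⟨h, hhk⟩ = η⁻¹ := hQh
    have hPfQ : Pf η k t h hhk f = Q := by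
      apply Polynomial.ext
      intro N
      by_cases hN1 : N < k
      · exact Pf_coeff_lt hhk f ⟨N, hN1⟩
      · by_cases hN2 : N = k + t
        · subst hN2
          rw [Pf_coeff_top hhk f, hQtop, hfh, mul_inv_cancel₀ hη]
        · by_cases hN3 : N ≤ k + t
          · rw [Pf_coeff_mid hhk f (by omega) hN2]
            have h2 := GI_mul_rstar_coeff_high hα hI hk1 t (j := N - k)
              (show N - k ≤ t by omega)
            rw [show k + (N - k) = N by omega, if_neg (by omega)] at h2
            exact h2.symm
          · rw [Pf_coeff_mid hhk f (by omega) hN2]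
            exact (coeff_eq_zero_of_natDegree_lt
              (lt_of_le_of_lt (GI_mul_rstar_natDegree_le hI t) (by omega))).symm
    have hf0 : f ≠ 0 := by
      intro h0
      rw [h0, Pi.zero_apply] at hfh
      exact inv_ne_zero hη hfh.symm
    have hcode := ha f hf0
    have hzero : ∀ i ∈ I, Matrix.vecMul f Gmat i = 0 := by
      intro i hi
      rw [hrow, hPfQ, hQdef, eval_mul, GIp_eval_root hi, zero_mul]
    have hsub : (Finset.univ.filter fun j => Matrix.vecMul f Gmat j ≠ 0)
        ⊆ Finset.univ \ I := by
      intro j hj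
      rw [Finset.mem_filter] at hj
      rw [Finset.mem_sdiff]
      exact ⟨Finset.mem_univ _, fun hjI => hj.2 (hzero j hjI)⟩
    have h1 := Finset.card_le_card hsub
    rw [Finset.card_sdiff_of_subset (Finset.subset_univ I), Finset.card_univ, Fintype.card_fin, hI] at h1
    have h2 : hammingNorm (Matrix.vecMul f Gmat)
        = (Finset.univ.filter fun j => Matrix.vecMul f Gmat j ≠ 0).card := rfl
    omega
  · intro hb f hf0
    by_contra hwt
    push_neg at hwt
    have hz : k ≤ (Finset.univ.filter fun j => Matrix.vecMul f Gmat j = 0).card := by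
      have h1 := Finset.card_filter_add_card_filter_not
        (s := (Finset.univ : Finset (Fin n))) (p := fun j => Matrix.vecMul f Gmat j = 0)
      have h2 : hammingNorm (Matrix.vecMul f Gmat)
          = (Finset.univ.filter fun j => ¬ Matrix.vecMul f Gmat j = 0).card := rfl
      rw [Finset.card_univ, Fintype.card_fin] at h1
      omega
    obtain ⟨I, hIsub, hI⟩ := Finset.exists_subset_card_eq hz
    apply hb I hI
    rw [hSsum I]
    have hvan : ∀ i ∈ I, (Pf η k t h hhk f).eval (α i) = 0 := by
      intro i hi
      have h3 := hIsub hi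
      rw [Finset.mem_filter] at h3
      rw [← hrow]
      exact h3.2
    have hdvd : GIp α I ∣ Pf η k t h hhk f := by
      unfold GIp
      exact Finset.prod_dvd_of_coprime
        ((Polynomial.pairwise_coprime_X_sub_C hα).set_pairwise ↑I)
        (fun i hi => (dvd_iff_isRoot).mpr (hvan i hi))
    obtain ⟨r, hrP⟩ := hdvd
    have hP0 : Pf η k t h hhk f ≠ 0 := Pf_ne_zero hhk hf0
    have hr0 : r ≠ 0 := by
      rintro rfl
      rw [mul_zero] at hrP
      exact hP0 hrP
    have hGIdeg : (GIp α I).natDegree = k := by rw [GIp_natDegree, hI]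
    have hrd : r.natDegree ≤ t := by
      have h1 := Pf_natDegree_le (η := η) (t := t) hhk f
      rw [hrP, natDegree_mul (GIp_ne_zero I) hr0, hGIdeg] at h1
      omega
    have hmid : ∀ j, j < t → (GIp α I * r).coeff (k + j) = 0 := by
      intro j hj
      rw [← hrP]
      exact Pf_coeff_mid hhk f (by omega) (by omega)
    have hre := r_eq hα hI hk1 hrd hmid
    have hrt : r.coeff t ≠ 0 := by
      intro h0
      rw [h0, map_zero, zero_mul] at hre
      exact hr0 hre
    have e1 : η * f ⟨h, hhk⟩ = r.coeff t := by
      rw [← Pf_coeff_top (η := η) hhk f, hrP, coeff_mul_top (GIp_monic I) hGIdeg hrd]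
    have e2 : f ⟨h, hhk⟩ = r.coeff t * (GIp α I * rstar α I k t).coeff h := by
      have h4 : (Pf η k t h hhk f).coeff h = f ⟨h, hhk⟩ := Pf_coeff_lt hhk f ⟨h, hhk⟩
      rw [← h4, hrP]
      conv_lhs => rw [hre]
      rw [show GIp α I * (C (r.coeff t) * rstar α I k t)
        = C (r.coeff t) * (GIp α I * rstar α I k t) by ring, coeff_C_mul]
    have h5 : r.coeff t * (η * (GIp α I * rstar α I k t).coeff h) = r.coeff t * 1 := by
      calc r.coeff t * (η * (GIp α I * rstar α I k t).coeff h)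
          = η * (r.coeff t * (GIp α I * rstar α I k t).coeff h) := by ring
        _ = η * f ⟨h, hhk⟩ := by rw [← e2]
        _ = r.coeff t := e1
        _ = r.coeff t * 1 := (mul_one _).symm
    exact mul_left_cancel₀ hrt h5
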